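/- arXiv:2106.09753 — 5 statements merged into one kernel-verified Lean document; each statement's English description precedes it below -/
import Mathlib

section
/- For all natural numbers n and r there exists a set T of functions Fin r → Fin n (r-tuples of elements of [n]) with the following three properties: (1) every element of T is injective (no r-tuple having two equal entries is in T); (2) every injective function s : Fin r → Fin n either belongs to T or is a transposition of an element of T, i.e. s = t ∘ Equiv.swap i j for some t ∈ T and some positions i ≠ j; (3) for every t ∈ T and all positions i ≠ j, the tuple t ∘ Equiv.swap i j does not belong to T. -/
lemma sort_comp_swap {n r : ℕ} {s : Fin r → Fin n} (hs : Function.Injective s)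
    (i j : Fin r) :
    Tuple.sort (s ∘ Equiv.swap i j) = Equiv.swap i j * Tuple.sort s := by
  have h1 : Monotone ((s ∘ ⇑(Equiv.swap i j)) ∘ ⇑(Equiv.swap i j * Tuple.sort s)) := by
    have : (s ∘ ⇑(Equiv.swap i j)) ∘ ⇑(Equiv.swap i j * Tuple.sort s)
        = s ∘ ⇑(Tuple.sort s) := by
      funext x
      simp [Equiv.swap_apply_self]
    rw [this]
    exact Tuple.monotone_sort s
  have h2 := Tuple.unique_monotone (Tuple.monotone_sort (s ∘ Equiv.swap i j)) h1
  have hinj : Function.Injective (s ∘ ⇑(Equiv.swap i j)) :=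
    hs.comp (Equiv.injective _)
  ext x
  have := congrFun h2 x
  exact congrArg Fin.val (hinj this)

/-- Lemma 2.3 of the paper: there is a set `T` of injective `r`-tuples of elements of
`[n]` such that every injective `r`-tuple is in `T` or a transposition of an element of
`T`, and no transposition of an element of `T` is in `T`. -/
theorem stmt_0 (n r : ℕ) :
    ∃ T : Set (Fin r → Fin n),
      (∀ t ∈ T, Function.Injective t) ∧
      (∀ s : Fin r → Fin n, Function.Injective s →
        s ∈ T ∨ ∃ t ∈ T, ∃ i j : Fin r, i ≠ j ∧ s = t ∘ Equiv.swap i j) ∧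
      (∀ t ∈ T, ∀ i j : Fin r, i ≠ j → (t ∘ Equiv.swap i j) ∉ T) := by
  refine ⟨{s | Function.Injective s ∧ Equiv.Perm.sign (Tuple.sort s) = 1}, ?_, ?_, ?_⟩
  · exact fun t ht => ht.1
  · intro s hs
    by_cases h : Equiv.Perm.sign (Tuple.sort s) = 1
    · exact Or.inl ⟨hs, h⟩
    · right
      have hne : Tuple.sort s ≠ 1 := by
        intro h1; rw [h1, map_one] at h; exact h rfl
      obtain ⟨x, hx⟩ : ∃ x, Tuple.sort s x ≠ x := by
        by_contra hc
        push_neg at hc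
        exact hne (Equiv.ext hc)
      set i := x
      set j := Tuple.sort s x
      have hij : i ≠ j := fun h' => hx h'.symm
      refine ⟨s ∘ Equiv.swap i j, ⟨hs.comp (Equiv.injective _), ?_⟩, i, j, hij, ?_⟩
      · rw [sort_comp_swap hs]
        rw [map_mul, Equiv.Perm.sign_swap hij]
        have : Equiv.Perm.sign (Tuple.sort s) = -1 := by
          rcases Int.units_eq_one_or (Equiv.Perm.sign (Tuple.sort s)) with h1 | h1
          · exact absurd h1 h
          · exact h1
        rw [this]; exact Int.units_mul_self (-1)
      · funext x
        simp [Equiv.swap_apply_self]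
  · rintro t ⟨hti, hts⟩ i j hij ⟨hinj, hsign⟩
    rw [sort_comp_swap hti, map_mul, Equiv.Perm.sign_swap hij, hts] at hsign
    simp at hsign
end

section
/- Let X be a topological space equipped with a partial order such that every open subset of X is an upper set (if u ∈ U, U is open and u ≤ v, then v ∈ U). Let Z be any topological space and let s, s' : Z → X be continuous maps such that s(z) ≤ s'(z) for every z ∈ Z. Then s and s' are homotopic, i.e. there is a continuous homotopy F : Z × [0,1] → X with F(·,0) = s' and F(·,1) = s. -/
/-- Proposition 4.4 of the paper: in a topological space whose open sets are upper
sets (the Up topology), if `s z ≤ s' z` for all `z`, then `s'` and `s` are homotopic,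
via a homotopy `F` with `F (·, 0) = s'` and `F (·, 1) = s`. -/
theorem stmt_1 {X Z : Type*} [TopologicalSpace X] [PartialOrder X]
    (hup : ∀ U : Set X, IsOpen U → IsUpperSet U)
    [TopologicalSpace Z] (s s' : Z → X) (hs : Continuous s) (hs' : Continuous s')
    (h : ∀ z, s z ≤ s' z) :
    Nonempty ((ContinuousMap.mk s' hs').Homotopy (ContinuousMap.mk s hs)) := by
  refine ⟨{ toFun := fun p => if p.1 = 1 then s p.2 else s' p.2,
            continuous_toFun := ?_,
            map_zero_left := fun z => by norm_num,
            map_one_left := fun z => by norm_num }⟩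
  rw [continuous_def]
  intro U hU
  have key : (fun p : unitInterval × Z => if p.1 = 1 then s p.2 else s' p.2) ⁻¹' U
      = (Set.univ ×ˢ (s ⁻¹' U)) ∪ (({1}ᶜ : Set unitInterval) ×ˢ (s' ⁻¹' U)) := by
    ext ⟨t, z⟩
    by_cases ht : t = 1
    · simp [ht]
    · simp only [Set.mem_preimage, if_neg ht, Set.mem_union, Set.mem_prod, Set.mem_univ,
        true_and, Set.mem_compl_iff, Set.mem_singleton_iff, ht, not_false_iff, and_true]
      exact ⟨Or.inr, fun h' => h'.elim (fun hz => hup U hU (h z) hz) id⟩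
  rw [key]
  exact (isOpen_univ.prod (hU.preimage hs)).union
    (isOpen_compl_singleton.prod (hU.preimage hs'))
end

section
/- Let Y be a topological space and let (W_k)_{k ∈ ℕ} be a monotone increasing sequence of open subsets of Y with ⋃_k W_k = Y. Suppose that for every k and every natural number n, every continuous map from the n-sphere Sⁿ into the subspace W_k is null-homotopic (homotopic, within W_k, to a constant map). Then for every n, every continuous map from Sⁿ into Y is null-homotopic. -/
open Set

theorem ContinuousMap.exists_range_subset_of_directed_open_cover {X Y ι : Type*}
    [TopologicalSpace X] [CompactSpace X] [TopologicalSpace Y] [Nonempty ι] (f : C(X, Y))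
    {W : ι → Set Y} (hdir : Directed (· ⊆ ·) W) (hopen : ∀ i, IsOpen (W i))
    (hcover : ⋃ i, W i = univ) : ∃ i, range f ⊆ W i :=
  (isCompact_range f.continuous).elim_directed_cover W hopen (hcover ▸ subset_univ _) hdir

theorem ContinuousMap.Nullhomotopic.of_codRestrict {X Y : Type*} [TopologicalSpace X]
    [TopologicalSpace Y] {f : C(X, Y)} {s : Set Y} (hf : ∀ x, f x ∈ s)
    (h : (⟨_, f.continuous.codRestrict hf⟩ : C(X, s)).Nullhomotopic) : f.Nullhomotopic :=
  h.comp_right ⟨Subtype.val, continuous_subtype_val⟩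

/-- The exhaustion argument proving Corollary 4.13 of the paper: if `Y` is the increasing
union of open sets `W k` such that every map of a sphere into `W k` is null-homotopic in
`W k`, then every map of a sphere into `Y` is null-homotopic. -/
theorem stmt_6 {Y : Type*} [TopologicalSpace Y] (W : ℕ → Set Y)
    (hmono : Monotone W) (hopen : ∀ k, IsOpen (W k)) (hunion : ⋃ k, W k = Set.univ)
    (h : ∀ (k n : ℕ)
      (f : C(Metric.sphere (0 : EuclideanSpace ℝ (Fin (n + 1))) 1, W k)),
        ∃ c, ContinuousMap.Homotopic f (ContinuousMap.const _ c)) :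
    ∀ (n : ℕ) (f : C(Metric.sphere (0 : EuclideanSpace ℝ (Fin (n + 1))) 1, Y)),
      ∃ c, ContinuousMap.Homotopic f (ContinuousMap.const _ c) := by
  intro n f
  obtain ⟨k, hk⟩ := f.exists_range_subset_of_directed_open_cover hmono.directed_le hopen hunion
  exact ContinuousMap.Nullhomotopic.of_codRestrict (fun x ↦ hk (mem_range_self x)) (h k n _)
end

section
/- Let X₁ and X₂ be metric spaces and let π : X₁ → cX₂ be a continuous map into the space of nonempty compact subsets of X₂ with the Hausdorff metric. Equip the disjoint union X = X₁ ⊕ X₂ with the Up topology: the topology generated by the sets inl(U) ∪ inr(⋃_{x ∈ U} π(x)) for U open in X₁, together with the sets inr(V) for V open in X₂. Let B be a compact metric space, let g : B → X be continuous, and let C = g⁻¹(inl(X₁)). Then for every ε > 0 there exists δ > 0 such that for all p ∈ C and q ∈ B with dist(p,q) < δ: if g(p) = inl(x) and g(q) = inr(y), then y lies in the ε-thickening of π(x). -/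
open Topology

/-- The Up topology on the disjoint union `X₁ ⊕ X₂` determined by a map
`π : X₁ → cX₂`: it is generated by the sets `inl '' U ∪ inr '' (⋃ x ∈ U, π x)` for `U`
open in `X₁`, together with the sets `inr '' V` for `V` open in `X₂`. -/
def upTopology {X₁ X₂ : Type*} [TopologicalSpace X₁] [TopologicalSpace X₂]
    (π : X₁ → TopologicalSpace.NonemptyCompacts X₂) : TopologicalSpace (X₁ ⊕ X₂) :=
  TopologicalSpace.generateFrom
    ({ S | ∃ U : Set X₁, IsOpen U ∧
        S = Sum.inl '' U ∪ Sum.inr '' (⋃ x ∈ U, (π x : Set X₂)) } ∪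
     { S | ∃ V : Set X₂, IsOpen V ∧ S = Sum.inr '' V })

/-- Lemma 4.8 of the paper: with `B` compact, `g : B → X₁ ⊕ X₂` continuous for the Up
topology and `C = g⁻¹(X₁)`, for every `ε > 0` there is `δ > 0` such that whenever
`p ∈ C`, `dist p q < δ`, `g p = inl x` and `g q = inr y`, the point `y` lies in the
`ε`-thickening of `π x`. -/
theorem stmt_8 {X₁ X₂ B : Type*} [MetricSpace X₁] [MetricSpace X₂]
    [MetricSpace B] [CompactSpace B]
    (π : X₁ → TopologicalSpace.NonemptyCompacts X₂) (hπ : Continuous π)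
    (g : B → X₁ ⊕ X₂) (hg : Continuous[inferInstance, upTopology π] g)
    {ε : ℝ} (hε : 0 < ε) :
    ∃ δ > (0 : ℝ), ∀ p q : B, dist p q < δ →
      ∀ (x : X₁) (y : X₂), g p = Sum.inl x → g q = Sum.inr y →
        y ∈ Metric.thickening ε (π x) := by
  classical
  have hopen1 : ∀ U : Set X₁, IsOpen U →
      IsOpen[upTopology π] (Sum.inl '' U ∪ Sum.inr '' (⋃ x ∈ U, (π x : Set X₂))) := by
    intro U hU
    exact TopologicalSpace.GenerateOpen.basic _ (Or.inl ⟨U, hU, rfl⟩)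
  set C : Set B := {p | ∃ x, g p = Sum.inl x} with hCdef
  have hCc : IsCompact C := by
    have hop : IsOpen[upTopology π] (Sum.inr '' (Set.univ : Set X₂)) :=
      TopologicalSpace.GenerateOpen.basic _ (Or.inr ⟨Set.univ, isOpen_univ, rfl⟩)
    have hCeq : C = (g ⁻¹' (Sum.inr '' (Set.univ : Set X₂)))ᶜ := by
      ext p; cases h : g p <;> simp [hCdef, h]
    have : IsClosed C := by
      rw [hCeq]
      exact (continuous_def.1 hg _ hop).isClosed_compl
    exact this.isCompact
  -- key local statement
  have key : ∀ p ∈ C, ∃ r > (0:ℝ), ∀ p' q : B, p' ∈ Metric.ball p (2*r) →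
      q ∈ Metric.ball p (2*r) → ∀ x y, g p' = Sum.inl x → g q = Sum.inr y →
      y ∈ Metric.thickening ε (π x) := by
    rintro p ⟨x₀, hx₀⟩
    set U : Set X₁ := π ⁻¹' Metric.ball (π x₀) (ε/2) with hUdef
    have hU : IsOpen U := hπ.isOpen_preimage _ Metric.isOpen_ball
    set S : Set (X₁ ⊕ X₂) := Sum.inl '' U ∪ Sum.inr '' (⋃ x ∈ U, (π x : Set X₂)) with hSdef
    have hSopen : IsOpen (g ⁻¹' S) := continuous_def.1 hg _ (hopen1 U hU)
    have hpS : p ∈ g ⁻¹' S := by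
      simp only [Set.mem_preimage, hx₀, hSdef]
      exact Or.inl ⟨x₀, by simp [hUdef, hε], rfl⟩
    obtain ⟨ρ, hρ, hball⟩ := Metric.isOpen_iff.1 hSopen p hpS
    refine ⟨ρ/2, by linarith, ?_⟩
    intro p' q hp' hq x y hx hy
    have h2r : 2 * (ρ/2) = ρ := by ring
    rw [h2r] at hp' hq
    have hp'S : g p' ∈ S := hball hp'
    have hqS : g q ∈ S := hball hq
    have hxU : x ∈ U := by
      rcases hp'S with ⟨x', hx', hxe⟩ | ⟨y', _, hye⟩
      · rw [hx] at hxe; cases hxe; exact hx'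
      · rw [hx] at hye; cases hye
    obtain ⟨x'', hx''U, hy''⟩ : ∃ x'' ∈ U, y ∈ (π x'' : Set X₂) := by
      rcases hqS with ⟨x', _, hxe⟩ | ⟨y', hy', hye⟩
      · rw [hy] at hxe; cases hxe
      · rw [hy] at hye
        cases hye
        simpa using hy'
    -- now distance estimate
    have hd : dist (π x'') (π x) < ε := by
      have h1 : dist (π x'') (π x₀) < ε/2 := hx''U
      have h2 : dist (π x) (π x₀) < ε/2 := hxU
      calc dist (π x'') (π x) ≤ dist (π x'') (π x₀) + dist (π x₀) (π x) := dist_triangle _ _ _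
        _ < ε/2 + ε/2 := by rw [dist_comm (π x₀)]; linarith
        _ = ε := by ring
    have hfin : EMetric.hausdorffEdist (π x'' : Set X₂) (π x : Set X₂) ≠ ⊤ :=
      Metric.hausdorffEdist_ne_top_of_nonempty_of_bounded (π x'').nonempty (π x).nonempty
        (π x'').isCompact.isBounded (π x).isCompact.isBounded
    have hinf : Metric.infDist y (π x : Set X₂) < ε := by
      calc Metric.infDist y (π x : Set X₂)
          ≤ Metric.hausdorffDist (π x'' : Set X₂) (π x : Set X₂) :=
            Metric.infDist_le_hausdorffDist_of_mem hy'' hfin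
        _ < ε := by rw [← Metric.NonemptyCompacts.dist_eq]; exact hd
    exact (Metric.mem_thickening_iff_infDist_lt (π x).nonempty).2 hinf
  choose! r hr hkey using key
  have hcov : C ⊆ ⋃ p ∈ C, Metric.ball p (r p) := fun p hp =>
    Set.mem_biUnion hp (Metric.mem_ball_self (hr p hp))
  obtain ⟨t, htC, htfin, htcov⟩ :=
    hCc.elim_finite_subcover_image (fun p _ => Metric.isOpen_ball) hcov
  by_cases hCne : C.Nonempty
  · obtain ⟨p₀, hp₀⟩ := hCne
    have hp₀' := htcov hp₀
    rw [Set.mem_iUnion₂] at hp₀'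
    obtain ⟨i₀, hi₀t, _⟩ := hp₀'
    have htne : htfin.toFinset.Nonempty := ⟨i₀, htfin.mem_toFinset.2 hi₀t⟩
    set δ := htfin.toFinset.inf' htne r with hδdef
    refine ⟨δ, ?_, ?_⟩
    · exact (Finset.lt_inf'_iff _).2 fun i hi => hr i (htC (htfin.mem_toFinset.1 hi))
    · intro p q hpq x y hx hy
      have hpC : p ∈ C := ⟨x, hx⟩
      have := htcov hpC
      rw [Set.mem_iUnion₂] at this
      obtain ⟨i, hit, hpball⟩ := this
      have hiC : i ∈ C := htC hit
      have hδi : δ ≤ r i := Finset.inf'_le _ (htfin.mem_toFinset.2 hit)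
      have hp2 : p ∈ Metric.ball i (2 * r i) := by
        rw [Metric.mem_ball] at hpball ⊢
        have := hr i hiC
        linarith
      have hq2 : q ∈ Metric.ball i (2 * r i) := by
        rw [Metric.mem_ball] at hpball ⊢
        calc dist q i ≤ dist q p + dist p i := dist_triangle _ _ _
          _ < δ + r i := by rw [dist_comm q p]; linarith
          _ ≤ 2 * r i := by linarith
      exact hkey i hiC p q hp2 hq2 x y hx hy
  · refine ⟨1, one_pos, ?_⟩
    intro p q _ x y hx _
    exact absurd ⟨x, hx⟩ (fun h => hCne ⟨p, h⟩)
end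

section
/- Let X be a topological space equipped with a partial order such that every open subset of X is an upper set, and suppose X has discrete type: two points p, q ∈ X are joined by a path in X if and only if they are related by the equivalence relation generated by the comparability relation 'a ≤ b or b ≤ a'. Suppose there exists a homotopy equivalence between X and a topological space K which is T1 and locally path-connected. Then every path component of X is contractible as a subspace of X, and the space of path components of X (the quotient of X by the joined-by-a-path relation, with the quotient topology) is discrete. -/
/-!
If every open set is an upper set, then `a ≤ b` forces `b ⤳ a`, so every continuous map into a
T1 space is constant on comparable points, hence on the classes of the equivalence relation they
generate, which by discrete type are the path components. Let `f : X → K` be one half of the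
homotopy equivalence and `g` the other. Then `g ∘ f` is constant on path components and
homotopic to the identity, so the homotopy, restricted to a path component, contracts it.
Moreover, as `g ∘ f` is homotopic to the identity, a point whose image under `f` is joined to
`f x` is itself joined to `x`, so the path component of `x` is the preimage under `f` of a path
component of the locally path-connected space `K`, hence open; thus the quotient by path
components is discrete.
-/

open Topology

section UpperSetTopology

variable {X K : Type*} [TopologicalSpace X] [Preorder X] [TopologicalSpace K]

theorem specializes_of_le_of_forall_isOpen_isUpperSet
    (hup : ∀ U : Set X, IsOpen U → IsUpperSet U) {a b : X} (hab : a ≤ b) : b ⤳ a :=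
  specializes_iff_forall_open.2 fun U hU haU => hup U hU hab haU

theorem apply_eq_of_eqvGen_comparable_of_forall_isOpen_isUpperSet [T1Space K]
    (hup : ∀ U : Set X, IsOpen U → IsUpperSet U) {f : X → K} (hf : Continuous f) {p q : X}
    (hpq : Relation.EqvGen (fun a b => a ≤ b ∨ b ≤ a) p q) : f p = f q := by
  have hle : ∀ {a b : X}, a ≤ b → f a = f b := fun hab =>
    (specializes_iff_eq.1 ((specializes_of_le_of_forall_isOpen_isUpperSet hup hab).map hf)).symm
  exact congrArg (Quot.lift f fun a b hab => hab.elim hle fun hba => (hle hba).symm)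
    (Quot.eqvGen_sound hpq)

end UpperSetTopology

section PathComponents

variable {X K : Type*} [TopologicalSpace X] [TopologicalSpace K]

theorem ContinuousMap.Homotopy.joined_apply {f₀ f₁ : C(X, K)} (H : f₀.Homotopy f₁)
    (t : unitInterval) (x : X) : Joined (H (t, x)) (f₁ x) :=
  (isPathConnected_range (H.evalAt x).continuous_extend).joinedIn _ ⟨t, by simp⟩ _ ⟨1, by simp⟩
    |>.joined

theorem contractibleSpace_pathComponent_of_homotopic_id {φ : C(X, X)}
    (hφ : φ.Homotopic (ContinuousMap.id X)) (hconst : ∀ p q : X, Joined p q → φ p = φ q)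
    (x : X) : ContractibleSpace (pathComponent x) := by
  obtain ⟨H⟩ := hφ
  have hmem : ∀ (t : unitInterval) (y : pathComponent x), H (t, y) ∈ pathComponent x :=
    fun t y => y.2.trans (H.joined_apply t y).symm
  let c : pathComponent x := ⟨φ x, ⟨(H.evalAt x).symm⟩⟩
  refine (contractible_iff_id_nullhomotopic _).2 ⟨c, Nonempty.intro ?_⟩
  refine ContinuousMap.Homotopy.symm
    { toFun := fun p => ⟨H (p.1, p.2), hmem p.1 p.2⟩
      continuous_toFun := by fun_prop
      map_zero_left := fun y => Subtype.ext ?_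
      map_one_left := fun y => Subtype.ext (H.apply_one y) }
  exact (H.apply_zero y).trans (hconst _ _ y.2.symm)

theorem joined_of_joined_apply_of_homotopic_id {f : C(X, K)} {g : C(K, X)}
    (hgf : (g.comp f).Homotopic (ContinuousMap.id X)) {x y : X} (hxy : Joined (f x) (f y)) :
    Joined x y := by
  obtain ⟨H⟩ := hgf
  have hjoined : ∀ z : X, Joined (g (f z)) z := fun z => ⟨H.evalAt z⟩
  exact (hjoined x).symm.trans (⟨hxy.somePath.map g.continuous⟩ : Joined (g (f x)) _)
    |>.trans (hjoined y)

theorem isOpen_pathComponent_of_homotopic_id [LocallyPathConnectedSpace K] {f : C(X, K)}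
    {g : C(K, X)} (hgf : (g.comp f).Homotopic (ContinuousMap.id X)) (x : X) :
    IsOpen (pathComponent x) := by
  have hpre : pathComponent x = f ⁻¹' pathComponent (f x) := Set.ext fun y =>
    ⟨fun hy => ⟨hy.somePath.map f.continuous⟩, joined_of_joined_apply_of_homotopic_id hgf⟩
  rw [hpre]
  exact (IsOpen.pathComponent (f x)).preimage f.continuous

theorem ZerothHomotopy.discreteTopology_of_isOpen_pathComponent
    (h : ∀ x : X, IsOpen (pathComponent x)) : DiscreteTopology (ZerothHomotopy X) := by
  refine discreteTopology_iff_isOpen_singleton.2 fun c => ?_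
  obtain ⟨x, rfl⟩ := ZerothHomotopy.mk_surjective c
  rw [← ZerothHomotopy.isQuotientMap_mk.isOpen_preimage,
    ZerothHomotopy.preimage_singleton_eq_pathComponent]
  exact h x

end PathComponents

/-- The forward direction of Theorem 8.3 of the paper: if `X` carries an Up-type
topology (open sets are upper sets), has discrete type (points are joined by a path iff
they are equivalent under the equivalence relation generated by comparability), and is
homotopy equivalent to a T1 locally path-connected space, then every path component of
`X` is contractible and the space of path components of `X` is discrete. -/
theorem stmt_11 {X K : Type*} [TopologicalSpace X] [PartialOrder X]
    (hup : ∀ U : Set X, IsOpen U → IsUpperSet U)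
    (hdt : ∀ p q : X,
      Joined p q ↔ Relation.EqvGen (fun a b => a ≤ b ∨ b ≤ a) p q)
    [TopologicalSpace K] [T1Space K] [LocallyPathConnectedSpace K]
    (h : Nonempty (ContinuousMap.HomotopyEquiv X K)) :
    (∀ x : X, ContractibleSpace (pathComponent x)) ∧
    @DiscreteTopology (ZerothHomotopy X)
      (@instTopologicalSpaceQuotient X (pathSetoid X) _) := by
  obtain ⟨e⟩ := h
  have hconst : ∀ p q : X, Joined p q → e.invFun (e.toFun p) = e.invFun (e.toFun q) :=
    fun p q hpq => congrArg e.invFun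
      (apply_eq_of_eqvGen_comparable_of_forall_isOpen_isUpperSet hup e.toFun.continuous
        ((hdt p q).1 hpq))
  exact ⟨contractibleSpace_pathComponent_of_homotopic_id e.left_inv hconst,
    ZerothHomotopy.discreteTopology_of_isOpen_pathComponent
      (isOpen_pathComponent_of_homotopic_id e.left_inv)⟩
end
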